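/- arXiv:1710.03880 — 13 statements merged into one kernel-verified Lean document; each statement's English description precedes it below -/
import Mathlib

section
/- Let T : M → M be an A-module map (i.e. T is k-linear and T(a·m) = a·T(m) for all a ∈ A, m ∈ M). Then the following are equivalent: (a) (M, T) is a generic Rota-Baxter paired A-module of weight λ; (b) there exists a k-linear map P : A → A such that (M, P, T) is a Rota-Baxter paired A-module of weight λ; (c) T is quasi-idempotent of weight λ, i.e. T∘T = −λ·T. -/
/-- For an `A`-linear `T : M → M`, the following are equivalent:
(a) `(M, T)` is a generic Rota-Baxter paired `A`-module of weight `l`;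
(b) there exists a `k`-linear `P : A → A` making `(M, P, T)` a Rota-Baxter paired
`A`-module of weight `l`;
(c) `T` is quasi-idempotent of weight `l`, i.e. `T ∘ T = -l • T`. -/
theorem stmt0 {k A M : Type*} [CommRing k] [Ring A] [Algebra k A]
    [AddCommGroup M] [Module k M] [Module A M] [IsScalarTower k A M]
    (l : k) (T : M →ₗ[k] M) (hT : ∀ (a : A) (m : M), T (a • m) = a • T m) :
    ((∀ P : A →ₗ[k] A, ∀ (a : A) (m : M),
        P a • T m = T (P a • m) + T (a • T m) + l • T (a • m)) ↔
      (∀ m : M, T (T m) = -l • T m)) ∧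
    ((∃ P : A →ₗ[k] A, ∀ (a : A) (m : M),
        P a • T m = T (P a • m) + T (a • T m) + l • T (a • m)) ↔
      (∀ m : M, T (T m) = -l • T m)) := by
  have hcomm : ∀ (a : A) (c : k) (m : M), a • (c • m) = c • (a • m) := by
    intro a c m
    rw [← algebraMap_smul A c m, ← algebraMap_smul A c (a • m), smul_smul, smul_smul,
      Algebra.commutes]
  -- from quasi-idempotence, the key vanishing identity
  have key : (∀ m : M, T (T m) = -l • T m) →
      ∀ (a : A) (m : M), T (a • T m) + l • T (a • m) = 0 := by
    intro hq a m
    rw [hT, hq, hT, hcomm, neg_smul, neg_add_cancel]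
  -- from any single P, quasi-idempotence
  have ofP : ∀ P : A →ₗ[k] A, (∀ (a : A) (m : M),
      P a • T m = T (P a • m) + T (a • T m) + l • T (a • m)) →
      ∀ m : M, T (T m) = -l • T m := by
    intro P hP m
    have h := hP 1 m
    rw [hT, one_smul, one_smul] at h
    have : T (T m) + l • T m = 0 := by linear_combination (norm := abel) -h
    rw [neg_smul]
    exact eq_neg_of_add_eq_zero_left this
  constructor
  · constructor
    · intro h; exact ofP 0 (h 0)
    · intro hq P a m
      rw [hT]
      have := key hq a m
      linear_combination (norm := abel) -this
  · constructor
    · rintro ⟨P, hP⟩; exact ofP P hP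
    · intro hq
      refine ⟨0, fun a m => ?_⟩
      simp only [LinearMap.zero_apply, zero_smul, map_zero, zero_add]
      have := key hq a m
      linear_combination (norm := abel) -this
end

section
/- Let T : M → M be a k-linear map and let C_M := {a ∈ A | T(a·m) = a·T(m) for all m ∈ M}, which is a unital subalgebra of A, so that M is a left C_M-module by restriction of the A-action. Then the following are equivalent: (a) (M, T) is a generic Rota-Baxter paired C_M-module of weight λ; (b) there exists a k-linear map P : C_M → C_M such that (M, P, T) is a Rota-Baxter paired C_M-module of weight λ; (c) T is quasi-idempotent of weight λ, i.e. T∘T = −λ·T. -/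
/-- For a `k`-linear `T : M → M` and the subalgebra
`C_M = {a ∈ A | T(a·m) = a·T(m) for all m}` of `A` (acting on `M` by restriction
of the `A`-action), the following are equivalent:
(a) `(M, T)` is a generic Rota-Baxter paired `C_M`-module of weight `l`;
(b) there exists a `k`-linear `P : C_M → C_M` making `(M, P, T)` a Rota-Baxter
paired `C_M`-module of weight `l`;
(c) `T` is quasi-idempotent of weight `l`. -/
theorem stmt2 {k A M : Type*} [CommRing k] [Ring A] [Algebra k A]
    [AddCommGroup M] [Module k M] [Module A M] [IsScalarTower k A M]
    (l : k) (T : M →ₗ[k] M) (C : Subalgebra k A)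
    (hC : ∀ a : A, a ∈ C ↔ ∀ m : M, T (a • m) = a • T m) :
    ((∀ P : C →ₗ[k] C, ∀ (a : C) (m : M),
        (P a : A) • T m = T ((P a : A) • m) + T ((a : A) • T m) + l • T ((a : A) • m)) ↔
      (∀ m : M, T (T m) = -l • T m)) ∧
    ((∃ P : C →ₗ[k] C, ∀ (a : C) (m : M),
        (P a : A) • T m = T ((P a : A) • m) + T ((a : A) • T m) + l • T ((a : A) • m)) ↔
      (∀ m : M, T (T m) = -l • T m)) := by
  have hcomm : ∀ (c : k) (a : A) (m : M), a • (c • m) = c • (a • m) := by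
    intro c a m
    rw [← algebraMap_smul A c m, ← mul_smul, ← Algebra.commutes, mul_smul,
      algebraMap_smul]
  -- (c) implies the "extra terms vanish" key fact
  have key : (∀ m : M, T (T m) = -l • T m) → ∀ (a : C) (m : M),
      T ((a : A) • T m) + l • T ((a : A) • m) = 0 := by
    intro hT a m
    have ha := (hC a).mp a.2
    rw [ha (T m), ha m, hT m, hcomm, neg_smul, neg_add_cancel]
  -- (b) implies (c)
  have bc : (∃ P : C →ₗ[k] C, ∀ (a : C) (m : M),
      (P a : A) • T m = T ((P a : A) • m) + T ((a : A) • T m) + l • T ((a : A) • m)) →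
      ∀ m : M, T (T m) = -l • T m := by
    rintro ⟨P, hP⟩ m
    have h := hP 1 m
    rw [(hC _).mp (P 1).2 m, OneMemClass.coe_one, one_smul, one_smul, add_assoc, left_eq_add] at h
    rw [neg_smul]
    exact eq_neg_of_add_eq_zero_left h
  -- (c) implies (a)
  have ca : (∀ m : M, T (T m) = -l • T m) → ∀ P : C →ₗ[k] C, ∀ (a : C) (m : M),
      (P a : A) • T m = T ((P a : A) • m) + T ((a : A) • T m) + l • T ((a : A) • m) := by
    intro hT P a m
    rw [(hC _).mp (P a).2 m, add_assoc, key hT a m, add_zero]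
  refine ⟨⟨fun h => bc ⟨0, h 0⟩, ca⟩, ⟨bc, fun h => ⟨0, ca h 0⟩⟩⟩
end

section
/- (Atkinson factorization for Rota-Baxter paired modules.) Assume λ ≠ 0 and that scalar multiplication by λ on M is injective. Let P : A → A and T : M → M be k-linear maps and set P̃ := −λ·id_A − P and T̃ := −λ·id_M − T. Then (M, P, T) is a Rota-Baxter paired A-module of weight λ if and only if for every a ∈ A and m ∈ M there exists n ∈ M such that P(a)·T(m) = T(n) and P̃(a)·T̃(m) = −T̃(n). -/
lemma expand_aux {k A M : Type*} [CommRing k] [Ring A] [Algebra k A]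
    [AddCommGroup M] [Module k M] [Module A M] [IsScalarTower k A M]
    (l : k) (a P : A) (m Tm : M) :
    (-(l • a) - P) • (-(l • m) - Tm) =
      l • (l • (a • m)) + l • (a • Tm) + l • (P • m) + P • Tm := by
  simp only [sub_smul, smul_sub, neg_smul, smul_neg, neg_neg, neg_sub, smul_assoc,
    smul_comm a l, smul_comm P l]
  abel

/-- Atkinson factorization for Rota-Baxter paired modules:
assume `l ≠ 0` and scalar multiplication by `l` on `M` is injective. With
`P̃ = -l·id - P` and `T̃ = -l·id - T`, the triple `(M, P, T)` is a Rota-Baxter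
paired `A`-module of weight `l` iff for all `a ∈ A`, `m ∈ M` there is `n ∈ M`
with `P(a)·T(m) = T(n)` and `P̃(a)·T̃(m) = -T̃(n)`. -/
theorem stmt3 {k A M : Type*} [CommRing k] [Ring A] [Algebra k A]
    [AddCommGroup M] [Module k M] [Module A M] [IsScalarTower k A M]
    (l : k) (hl : l ≠ 0) (hinj : Function.Injective fun m : M => l • m)
    (P : A →ₗ[k] A) (T : M →ₗ[k] M) :
    (∀ (a : A) (m : M), P a • T m = T (P a • m) + T (a • T m) + l • T (a • m)) ↔
    (∀ (a : A) (m : M), ∃ n : M,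
      P a • T m = T n ∧
      (-(l • a) - P a) • (-(l • m) - T m) = -(-(l • n) - T n)) := by
  constructor
  · intro h a m
    refine ⟨P a • m + a • T m + l • (a • m), ?_, ?_⟩
    · rw [h a m, map_add, map_add, T.map_smul]
    · rw [expand_aux, h a m]
      simp only [map_add, T.map_smul, smul_add, neg_sub, sub_neg_eq_add]
      abel
  · intro h a m
    obtain ⟨n, h1, h2⟩ := h a m
    rw [expand_aux, neg_sub, sub_neg_eq_add, h1] at h2
    have h3 : l • (l • (a • m)) + l • (a • T m) + l • (P a • m) + T n
        = l • n + T n := by rw [h2]; abel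
    have hX := add_right_cancel h3
    have hn : l • (l • (a • m) + a • T m + P a • m) = l • n := by
      rw [smul_add, smul_add, hX]
    have hn' : l • (a • m) + a • T m + P a • m = n := hinj hn
    rw [h1, ← hn', map_add, map_add, T.map_smul]
    abel
end

section
/- Let (M, P, T) be a Rota-Baxter paired A-module of weight λ. Define P̃ := −λ·id_A − P and T̃ := −λ·id_M − T. Then (M, P̃, T̃) is also a Rota-Baxter paired A-module of weight λ. -/
/-- if `(M, P, T)` is a Rota-Baxter paired `A`-module of weight `l`,
then so is `(M, P̃, T̃)` where `P̃ = -l·id - P` and `T̃ = -l·id - T`. -/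
theorem stmt5 {k A M : Type*} [CommRing k] [Ring A] [Algebra k A]
    [AddCommGroup M] [Module k M] [Module A M] [IsScalarTower k A M]
    (l : k) (P : A →ₗ[k] A) (T : M →ₗ[k] M)
    (hRBP : ∀ (a : A) (m : M),
      P a • T m = T (P a • m) + T (a • T m) + l • T (a • m)) :
    ∀ (a : A) (m : M),
      (-(l • a) - P a) • (-(l • m) - T m)
        = (-(l • ((-(l • a) - P a) • m)) - T ((-(l • a) - P a) • m))
          + (-(l • (a • (-(l • m) - T m))) - T (a • (-(l • m) - T m)))
          + l • (-(l • (a • m)) - T (a • m)) := by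
  have haux : ∀ (b : A) (x : M), b • l • x = l • b • x := by
    intro b x
    rw [← algebraMap_smul A l x, ← mul_smul, ← Algebra.commutes l b, mul_smul, algebraMap_smul]
  intro a m
  simp only [sub_smul, smul_sub, neg_smul, smul_neg, neg_sub, sub_neg_eq_add, map_sub, map_neg, map_add, map_smul, hRBP, haux, smul_assoc, smul_add, neg_add, neg_neg]
  abel
end

section
/- Let (M, P, T) be a right Rota-Baxter paired A-module of weight λ. Make the k-module End_k(M) of k-linear endomorphisms of M into a left A-module by (a·f)(m) := f(m·a) for a ∈ A, f ∈ End_k(M), m ∈ M. Define 𝐓 : End_k(M) → End_k(M) by 𝐓(f) := f∘T, and set 𝐓̃ := −λ·id − 𝐓. Then (End_k(M), P, 𝐓̃) is a (left) Rota-Baxter paired A-module of weight λ, i.e. P(a)·𝐓̃(f) = 𝐓̃(P(a)·f) + 𝐓̃(a·𝐓̃(f)) + λ·𝐓̃(a·f) for all a ∈ A and f ∈ End_k(M). -/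
/-- let `(M, P, T)` be a right Rota-Baxter paired `A`-module of
weight `l`. Make `End_k(M)` a left `A`-module by `(a·f)(m) = f(m·a)`, set
`𝐓(f) = f ∘ T` and `𝐓̃ = -l·id - 𝐓`. Then `(End_k(M), P, 𝐓̃)` is a left
Rota-Baxter paired `A`-module of weight `l`:
`P(a)·𝐓̃(f) = 𝐓̃(P(a)·f) + 𝐓̃(a·𝐓̃(f)) + l·𝐓̃(a·f)` for all `a`, `f`
(stated pointwise at each `m ∈ M`). -/
theorem stmt6 {k A M : Type*} [CommRing k] [Ring A] [Algebra k A]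
    [AddCommGroup M] [Module k M] [Module Aᵐᵒᵖ M] [IsScalarTower k Aᵐᵒᵖ M]
    (l : k) (P : A →ₗ[k] A) (T : M →ₗ[k] M)
    (hRBP : ∀ (a : A) (m : M),
      MulOpposite.op (P a) • T m
        = T (MulOpposite.op (P a) • m) + T (MulOpposite.op a • T m)
          + l • T (MulOpposite.op a • m)) :
    ∀ (a : A) (f : M →ₗ[k] M) (m : M),
      let act : A → (M → M) → (M → M) := fun b g x => g (MulOpposite.op b • x)
      let til : (M → M) → (M → M) := fun g x => -(l • g x) - g (T x)
      act (P a) (til f) m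
        = til (act (P a) f) m + til (act a (til f)) m + l • til (act a f) m := by
  intro a f m act til
  simp only [act, til]
  have h := congrArg f (hRBP a m)
  simp only [map_add, map_smul] at h
  rw [show f (T (MulOpposite.op (P a) • m)) = f (MulOpposite.op (P a) • T m)
      - f (T (MulOpposite.op a • T m)) - l • f (T (MulOpposite.op a • m)) by
    rw [h]; abel]
  simp only [map_sub, map_smul, map_neg, smul_sub, smul_neg]
  abel
end

section
/- Let (M, P, T) be a Rota-Baxter paired A-module of weight λ such that T is idempotent (T∘T = T). Then (1 + λ)·T(a·T(m)) = 0 for all a ∈ A and m ∈ M. -/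
/-- if `(M, P, T)` is a Rota-Baxter paired `A`-module of weight `l`
and `T` is idempotent, then `(1 + l) • T(a·T(m)) = 0` for all `a`, `m`. -/
theorem stmt7 {k A M : Type*} [CommRing k] [Ring A] [Algebra k A]
    [AddCommGroup M] [Module k M] [Module A M] [IsScalarTower k A M]
    (l : k) (P : A →ₗ[k] A) (T : M →ₗ[k] M)
    (hRBP : ∀ (a : A) (m : M),
      P a • T m = T (P a • m) + T (a • T m) + l • T (a • m))
    (hT : ∀ m : M, T (T m) = T m) :
    ∀ (a : A) (m : M), (1 + l) • T (a • T m) = 0 := by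
  intro a m
  have h1 := hRBP a m
  -- T applied to h1 gives T (P a • T m) = P a • T m
  have h2 : T (P a • T m) = P a • T m := by
    have := congrArg T h1
    simp only [map_add, map_smul, hT] at this
    rw [this, h1]
  have h3 := hRBP a (T m)
  rw [hT, h2, h1] at h3
  have h4 : T (a • T m) + l • T (a • T m) = 0 := by
    have e := sub_eq_zero_of_eq h3.symm
    calc T (a • T m) + l • T (a • T m)
        = T (P a • m) + T (a • T m) + l • T (a • m) + T (a • T m) +
            l • T (a • T m) -
            (T (P a • m) + T (a • T m) + l • T (a • m)) := by abel
      _ = 0 := e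
  rw [add_smul, one_smul]
  exact h4
end

section
/- Let (M, P, T) be a Rota-Baxter paired A-module of weight λ such that both P and T are idempotent (P∘P = P and T∘T = T). Then for all a ∈ A and m ∈ M: (1 + λ)·T(P(a)·m) = 0 and (1 + λ)·(P(a)·T(m) − λ·T(a·m)) = 0. -/
/-!
The Rota-Baxter identity writes `P a • T m` as a sum of values of `T`, so an idempotent `T`
fixes it. Feeding this back into the identity at `(P a, m)` (where `P (P a) = P a`) and at
`(a, T m)` (where `T (T m) = T m`) cancels `P a • T m` on both sides and leaves
`(1 + λ) • T (P a • m) = 0` and `(1 + λ) • T (a • T m) = 0`. The identity at `(a, m)` itself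
says that `P a • T m - λ • T (a • m)` is the sum of these two values of `T`.
-/

section

variable {k A M : Type*} [CommRing k] [Ring A] [Algebra k A] [AddCommGroup M] [Module k M]
  [Module A M]

def IsRotaBaxterPair (l : k) (P : A →ₗ[k] A) (T : M →ₗ[k] M) : Prop :=
  ∀ (a : A) (m : M), P a • T m = T (P a • m) + T (a • T m) + l • T (a • m)

namespace IsRotaBaxterPair

variable {l : k} {P : A →ₗ[k] A} {T : M →ₗ[k] M}

theorem sub_smul_apply_smul (h : IsRotaBaxterPair l P T) (a : A) (m : M) :
    P a • T m - l • T (a • m) = T (P a • m) + T (a • T m) := by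
  rw [h a m, add_sub_cancel_right]

theorem apply_smul_apply_of_idempotent (h : IsRotaBaxterPair l P T)
    (hT : ∀ m : M, T (T m) = T m) (a : A) (m : M) : T (P a • T m) = P a • T m := by
  rw [h a m]
  simp only [map_add, map_smul, hT]

theorem one_add_smul_apply_smul_eq_zero (h : IsRotaBaxterPair l P T)
    (hT : ∀ m : M, T (T m) = T m) {b : A} (hb : P b = b) (m : M) :
    (1 + l) • T (b • m) = 0 := by
  have hfix := h.apply_smul_apply_of_idempotent hT b m
  have hRB := h b m
  rw [hb] at hfix hRB
  rw [hfix] at hRB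
  -- `module` would read `b • T m` as an `A`-scalar multiple and fail to match scalars in `k`
  generalize b • T m = x at hRB
  linear_combination (norm := module) -hRB

theorem one_add_smul_apply_smul_apply_eq_zero (h : IsRotaBaxterPair l P T)
    (hT : ∀ m : M, T (T m) = T m) (a : A) (m : M) : (1 + l) • T (a • T m) = 0 := by
  have hRB := h a (T m)
  rw [hT, h.apply_smul_apply_of_idempotent hT] at hRB
  generalize P a • T m = x at hRB
  linear_combination (norm := module) -hRB

end IsRotaBaxterPair

end

theorem stmt8_general {k A M : Type*} [CommRing k] [Ring A] [Algebra k A]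
    [AddCommGroup M] [Module k M] [Module A M]
    (l : k) (P : A →ₗ[k] A) (T : M →ₗ[k] M)
    (hRBP : ∀ (a : A) (m : M),
      P a • T m = T (P a • m) + T (a • T m) + l • T (a • m))
    (hP : ∀ a : A, P (P a) = P a) (hT : ∀ m : M, T (T m) = T m) :
    ∀ (a : A) (m : M),
      (1 + l) • T (P a • m) = 0 ∧
      (1 + l) • (P a • T m - l • T (a • m)) = 0 := by
  have h : IsRotaBaxterPair l P T := hRBP
  intro a m
  have hPa := h.one_add_smul_apply_smul_eq_zero hT (hP a) m
  refine ⟨hPa, ?_⟩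
  rw [h.sub_smul_apply_smul, smul_add, hPa, h.one_add_smul_apply_smul_apply_eq_zero hT, add_zero]

/-- if `(M, P, T)` is a Rota-Baxter paired `A`-module of weight `l`
with both `P` and `T` idempotent, then `(1 + l) • T(P(a)·m) = 0` and
`(1 + l) • (P(a)·T(m) - l·T(a·m)) = 0` for all `a`, `m`. -/
theorem stmt8 {k A M : Type*} [CommRing k] [Ring A] [Algebra k A]
    [AddCommGroup M] [Module k M] [Module A M] [IsScalarTower k A M]
    (l : k) (P : A →ₗ[k] A) (T : M →ₗ[k] M)
    (hRBP : ∀ (a : A) (m : M),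
      P a • T m = T (P a • m) + T (a • T m) + l • T (a • m))
    (hP : ∀ a : A, P (P a) = P a) (hT : ∀ m : M, T (T m) = T m) :
    ∀ (a : A) (m : M),
      (1 + l) • T (P a • m) = 0 ∧
      (1 + l) • (P a • T m - l • T (a • m)) = 0 :=
  stmt8_general l P T hRBP hP hT
end

section
/- Let (A, P) be a Rota-Baxter algebra of weight λ and let (M, P, T) be a Rota-Baxter paired A-module of weight λ. Define a new product on A by a ⋆ b := aP(b) + P(a)b + λab and a new action a ▷ m := P(a)·m + a·T(m) + λ·(a·m) for a, b ∈ A, m ∈ M. Then the action ▷ is associative over the ⋆-product: (a ⋆ b) ▷ m = a ▷ (b ▷ m) for all a, b ∈ A and m ∈ M; that is, M with ▷ is a (not necessarily unital) module over the algebra (A, ⋆). -/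
/-- let `(A, P)` be a Rota-Baxter algebra of weight `l` and
`(M, P, T)` a Rota-Baxter paired `A`-module of weight `l`. With
`a ⋆ b = aP(b) + P(a)b + l·ab` and `a ▷ m = P(a)·m + a·T(m) + l·(a·m)`, the
action `▷` is associative over `⋆`: `(a ⋆ b) ▷ m = a ▷ (b ▷ m)`. -/
theorem stmt9 {k A M : Type*} [CommRing k] [Ring A] [Algebra k A]
    [AddCommGroup M] [Module k M] [Module A M] [IsScalarTower k A M]
    (l : k) (P : A →ₗ[k] A) (T : M →ₗ[k] M)
    (hRB : ∀ x y : A, P x * P y = P (P x * y) + P (x * P y) + l • P (x * y))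
    (hRBP : ∀ (a : A) (m : M),
      P a • T m = T (P a • m) + T (a • T m) + l • T (a • m)) :
    ∀ (a b : A) (m : M),
      let tri : A → M → M := fun x n => P x • n + x • T n + l • (x • n)
      tri (a * P b + P a * b + l • (a * b)) m = tri a (tri b m) := by
  intro a b m tri
  have h1 : P (a * P b + P a * b + l • (a * b)) = P a * P b := by
    rw [map_add, map_add, map_smul, hRB a b]; abel
  have h2 := hRBP b m
  have hmul : ∀ (x y : A) (n : M), (x * y) • n = x • (y • n) := mul_smul
  have hassoc : ∀ (x : A) (n : M), (l • x) • n = l • (x • n) := fun x n => smul_assoc l x n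
  have hcomm : ∀ (x : A) (n : M), x • (l • n) = l • (x • n) := fun x n => (smul_comm l x n).symm
  simp only [tri, h1, map_add, map_smul, add_smul, smul_add, hmul, hassoc, h2, hcomm]
  abel
end

section
/- Let (A, P) be a Rota-Baxter algebra of weight λ and let (M, P, T) be a Rota-Baxter paired A-module of weight λ. Define a ▷ m := P(a)·m + a·T(m) + λ·(a·m) for a ∈ A, m ∈ M. Then: (1) T(a ▷ m) = P(a)·T(m) for all a ∈ A, m ∈ M; and (2) P(a) ▷ T(m) = T(P(a) ▷ m) + T(a ▷ T(m)) + λ·T(a ▷ m) for all a ∈ A, m ∈ M, so that (M, P, T) with the action ▷ is again a (nonunital) Rota-Baxter paired A-module of weight λ. -/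
/-- let `(A, P)` be a Rota-Baxter algebra of weight `l` and
`(M, P, T)` a Rota-Baxter paired `A`-module of weight `l`. With
`a ▷ m = P(a)·m + a·T(m) + l·(a·m)`:
(1) `T(a ▷ m) = P(a)·T(m)`;
(2) `P(a) ▷ T(m) = T(P(a) ▷ m) + T(a ▷ T(m)) + l·T(a ▷ m)`,
so `(M, P, T)` with `▷` is again a (nonunital) Rota-Baxter paired `A`-module. -/
theorem stmt10 {k A M : Type*} [CommRing k] [Ring A] [Algebra k A]
    [AddCommGroup M] [Module k M] [Module A M] [IsScalarTower k A M]
    (l : k) (P : A →ₗ[k] A) (T : M →ₗ[k] M)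
    (hRB : ∀ x y : A, P x * P y = P (P x * y) + P (x * P y) + l • P (x * y))
    (hRBP : ∀ (a : A) (m : M),
      P a • T m = T (P a • m) + T (a • T m) + l • T (a • m)) :
    let tri : A → M → M := fun x n => P x • n + x • T n + l • (x • n)
    (∀ (a : A) (m : M), T (tri a m) = P a • T m) ∧
    (∀ (a : A) (m : M),
      tri (P a) (T m) = T (tri (P a) m) + T (tri a (T m)) + l • T (tri a m)) := by
  intro tri
  have h1 : ∀ (a : A) (m : M), T (tri a m) = P a • T m := by
    intro a m
    simp only [tri, map_add, map_smul]
    exact (hRBP a m).symm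
  refine ⟨h1, fun a m => ?_⟩
  rw [h1, h1, h1]
end

section
/- Let k be a field and H a Hopf algebra over k with comultiplication Δ(h) = h₁ ⊗ h₂ (Sweedler notation). Regard H as a left module over the convolution algebra H* via f ▷ h := h₁·f(h₂). Fix χ ∈ H* and define T : H → H by T(h) = χ(h₁)·h₂. Then T is an H*-module map, and (H, T) is a generic Rota-Baxter paired H*-module of weight −1 (i.e., for every k-linear map P : H* → H*, P(f) ▷ T(h) = T(P(f) ▷ h) + T(f ▷ T(h)) − T(f ▷ h) for all f ∈ H*, h ∈ H) if and only if χ∗χ = χ in the convolution algebra H*. -/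
/-!
Write `T = rightHit χ : h ↦ χ(h₁) h₂` and `leftHit f : h ↦ h₁ f(h₂)`. Coassociativity says that
`T` is a map of right comodules, `Δ ∘ T = (T ⊗ id) ∘ Δ`; hence `T` commutes with every
`leftHit f`, and `rightHit χ ∘ rightHit ψ = rightHit (ψ ∗ χ)`. As `ε ∘ rightHit χ = χ`, `T` is
idempotent iff `χ ∗ χ = χ`. For a `T` commuting with the action, the weight `-1` Rota–Baxter
identity collapses to `T (T (f ▷ h)) = T (f ▷ h)`, which for all `f` (take `f = ε`, acting as the
identity) is idempotency of `T`.
-/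

open scoped TensorProduct

section

open TensorProduct WithConv

namespace Coalgebra

variable {R C : Type*} [CommSemiring R] [AddCommMonoid C] [Module R C] [Coalgebra R C]

noncomputable def leftHit (f : C →ₗ[R] R) : C →ₗ[R] C :=
  (_root_.TensorProduct.rid R C).toLinearMap ∘ₗ map LinearMap.id f ∘ₗ comul

noncomputable def rightHit (f : C →ₗ[R] R) : C →ₗ[R] C :=
  (_root_.TensorProduct.lid R C).toLinearMap ∘ₗ map f LinearMap.id ∘ₗ comul

theorem leftHit_counit : leftHit (counit : C →ₗ[R] R) = LinearMap.id := by
  ext c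
  simp [leftHit, ← LinearMap.lTensor_def]

theorem comul_comp_rightHit (f : C →ₗ[R] R) :
    comul ∘ₗ rightHit f = (rightHit f).rTensor C ∘ₗ comul := by
  set φ : C ⊗[R] C →ₗ[R] C := (_root_.TensorProduct.lid R C).toLinearMap ∘ₗ map f LinearMap.id
  have hφ : φ.rTensor C ∘ₗ (_root_.TensorProduct.assoc R C C C).symm.toLinearMap =
      (_root_.TensorProduct.lid R (C ⊗[R] C)).toLinearMap ∘ₗ map f LinearMap.id := by
    ext a b c
    simp [φ, smul_tmul']
  calc comul ∘ₗ rightHit f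
      = (_root_.TensorProduct.lid R (C ⊗[R] C)).toLinearMap ∘ₗ map f comul ∘ₗ comul := by
        simp only [rightHit, ← LinearMap.comp_assoc, CoassocSimps.lid_comp_map f comul]
    _ = φ.rTensor C ∘ₗ (_root_.TensorProduct.assoc R C C C).symm.toLinearMap ∘ₗ
          comul.lTensor C ∘ₗ comul := by
        simp only [← LinearMap.comp_assoc, hφ]
        rw [LinearMap.comp_assoc (LinearMap.lTensor C comul), LinearMap.map_comp_lTensor,
          LinearMap.id_comp]
    _ = (rightHit f).rTensor C ∘ₗ comul := by
        rw [coassoc_symm, ← LinearMap.comp_assoc, ← LinearMap.rTensor_comp]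
        rfl

theorem leftHit_comp_rightHit (f g : C →ₗ[R] R) :
    leftHit f ∘ₗ rightHit g = rightHit g ∘ₗ leftHit f := by
  rw [leftHit, LinearMap.comp_assoc, LinearMap.comp_assoc, comul_comp_rightHit]
  simp only [← LinearMap.comp_assoc]
  congr 1
  ext a b
  simp

theorem rightHit_comp_rightHit (f g : C →ₗ[R] R) :
    rightHit g ∘ₗ rightHit f = rightHit (g ∘ₗ rightHit f) := by
  rw [rightHit, LinearMap.comp_assoc, LinearMap.comp_assoc, comul_comp_rightHit]
  simp only [rightHit, ← LinearMap.comp_assoc]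
  congr 1
  ext a b
  simp

theorem comp_rightHit (f g : C →ₗ[R] R) :
    g ∘ₗ rightHit f = (toConv f * toConv g).ofConv := by
  simp only [LinearMap.convMul_def, rightHit, ← LinearMap.comp_assoc]
  congr 1
  ext a b
  simp

theorem counit_comp_rightHit (f : C →ₗ[R] R) : counit ∘ₗ rightHit f = f := by
  have hε : toConv (counit : C →ₗ[R] R) = 1 := by ext; simp
  rw [comp_rightHit, hε, mul_one]

theorem rightHit_comp_self_eq_iff (χ : C →ₗ[R] R) :
    rightHit χ ∘ₗ rightHit χ = rightHit χ ↔ IsIdempotentElem (toConv χ) := by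
  rw [rightHit_comp_rightHit, comp_rightHit, IsIdempotentElem]
  constructor
  · intro h
    have hχ := congr(counit ∘ₗ $h)
    rw [counit_comp_rightHit, counit_comp_rightHit] at hχ
    exact congrArg toConv hχ
  · intro h
    rw [h]

theorem isIdempotentElem_toConv_iff (χ : C →ₗ[R] R) :
    IsIdempotentElem (toConv χ) ↔
      ∀ c, _root_.TensorProduct.lid R R (map χ χ (comul c)) = χ c := by
  have hμ : LinearMap.mul' R R = (_root_.TensorProduct.lid R R).toLinearMap :=
    TensorProduct.ext' fun a b => by simp
  rw [IsIdempotentElem, ← ofConv_injective.eq_iff, LinearMap.convMul_def, hμ, LinearMap.ext_iff]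
  rfl

end Coalgebra

end

theorem rotaBaxter_weight_neg_one_iff_of_commute {B M : Type*} [AddCommGroup M]
    {act : B → M → M} {T : M → M} (hT : ∀ b m, act b (T m) = T (act b m)) (b b' : B) (m : M) :
    act b' (T m) = T (act b' m) + T (act b (T m)) - T (act b m) ↔
      T (T (act b m)) = T (act b m) := by
  rw [hT, hT, add_sub_assoc, left_eq_add, sub_eq_zero]

/-- let `H` be a Hopf algebra over a field `k`, regarded as a left
module over the convolution algebra `H*` via `f ▷ h = h₁ f(h₂)`. For `χ ∈ H*`
define `T(h) = χ(h₁) h₂`. Then `T` is an `H*`-module map, and `(H, T)` is a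
generic Rota-Baxter paired `H*`-module of weight `-1` iff `χ ∗ χ = χ` in the
convolution algebra `H*`. -/
theorem stmt12 {k H : Type*} [Field k] [Ring H] [HopfAlgebra k H]
    (χ : H →ₗ[k] k) :
    let act : (H →ₗ[k] k) → H → H := fun f h =>
      (TensorProduct.rid k H)
        (TensorProduct.map (LinearMap.id : H →ₗ[k] H) f (Coalgebra.comul h))
    let T : H → H := fun h =>
      (TensorProduct.lid k H)
        (TensorProduct.map χ (LinearMap.id : H →ₗ[k] H) (Coalgebra.comul h))
    (∀ (f : H →ₗ[k] k) (h : H), act f (T h) = T (act f h)) ∧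
    ((∀ (P : (H →ₗ[k] k) →ₗ[k] (H →ₗ[k] k)) (f : H →ₗ[k] k) (h : H),
        act (P f) (T h) = T (act (P f) h) + T (act f (T h)) - T (act f h)) ↔
      (∀ h : H, (TensorProduct.lid k k)
          (TensorProduct.map χ χ (Coalgebra.comul h)) = χ h)) := by
  intro act T
  have hT : ∀ f h, act f (T h) = T (act f h) := fun f h =>
    LinearMap.congr_fun (Coalgebra.leftHit_comp_rightHit f χ) h
  refine ⟨hT, ?_⟩
  rw [← Coalgebra.isIdempotentElem_toConv_iff, ← Coalgebra.rightHit_comp_self_eq_iff]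
  simp only [rotaBaxter_weight_neg_one_iff_of_commute hT]
  constructor
  · intro hRB
    ext h
    have hε : ∀ h, act Coalgebra.counit h = h := LinearMap.congr_fun Coalgebra.leftHit_counit
    have hTT := hRB LinearMap.id Coalgebra.counit h
    rwa [hε] at hTT
  · intro hidem P f h
    exact LinearMap.congr_fun hidem _
end

section
/- Let H be a unital associative k-algebra and Π : H → H a k-linear map satisfying Π∘Π = Π and Π(Π(x)y) = Π(x)·Π(y) for all x, y ∈ H (properties (W1) and (W2) of the target map Π^L(h) = ε(1₁h)1₂ of a weak bialgebra). Let H^L := Π(H) be the image of Π, a (not necessarily unital) subalgebra of H acting on H by left multiplication. Then: (1) for every k-linear map P : H^L → H^L and all a ∈ H^L, m ∈ H, one has P(a)·Π(m) = Π(P(a)·m) + Π(a·Π(m)) − Π(a·m), i.e. (H, Π) is a generic Rota-Baxter paired H^L-module of weight −1; (2) for all x, y ∈ H^L, Π(x)Π(y) = Π(Π(x)y) + Π(xΠ(y)) − Π(xy), i.e. (H^L, Π restricted to H^L) is a Rota-Baxter algebra of weight −1. -/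
/-- let `H` be a unital `k`-algebra and `Pl : H → H` a `k`-linear
map with `Pl ∘ Pl = Pl` and `Pl(Pl(x)y) = Pl(x)Pl(y)` (properties (W1), (W2) of
the target map of a weak bialgebra). Let `H^L = Pl(H)` act on `H` by left
multiplication. Then:
(1) `(H, Pl)` is a generic Rota-Baxter paired `H^L`-module of weight `-1`;
(2) `(H^L, Pl)` is a Rota-Baxter algebra of weight `-1`. -/
theorem stmt13 {k H : Type*} [CommRing k] [Ring H] [Algebra k H]
    (Pl : H →ₗ[k] H) (hidem : ∀ x : H, Pl (Pl x) = Pl x)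
    (hW2 : ∀ x y : H, Pl (Pl x * y) = Pl x * Pl y) :
    (∀ (P : LinearMap.range Pl →ₗ[k] LinearMap.range Pl)
        (a : LinearMap.range Pl) (m : H),
      (P a : H) * Pl m
        = Pl ((P a : H) * m) + Pl ((a : H) * Pl m) - Pl ((a : H) * m)) ∧
    (∀ x y : H, x ∈ LinearMap.range Pl → y ∈ LinearMap.range Pl →
      Pl x * Pl y = Pl (Pl x * y) + Pl (x * Pl y) - Pl (x * y)) := by
  have hfix : ∀ x : H, x ∈ LinearMap.range Pl → Pl x = x := by
    rintro x ⟨z, rfl⟩; exact hidem z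
  have hmul : ∀ x m : H, x ∈ LinearMap.range Pl → Pl (x * m) = x * Pl m := by
    intro x m hx
    rw [← hfix x hx, hW2, hfix x hx]
  constructor
  · intro P a m
    rw [hmul _ m (P a).2, hmul _ (Pl m) a.2, hmul _ m a.2, hidem]
    rw [add_sub_cancel_right]
  · intro x y hx hy
    rw [hfix x hx, hfix y hy, hmul x y hx, hfix y hy]
    rw [add_sub_cancel_right]
end

section
/- Let k be a field and H a Hopf algebra over k with antipode S, comultiplication Δ(h) = h₁ ⊗ h₂ and counit ε. Let M be a right H-Hopf module: M is a right H-module and a right H-comodule with coaction ρ(m) = m₍₀₎ ⊗ m₍₁₎ such that ρ(m·h) = (m₍₀₎·h₁) ⊗ (m₍₁₎h₂) for all m ∈ M, h ∈ H. Define E_M : M → M by E_M(m) = m₍₀₎·S(m₍₁₎) and ε̃ : H → H by ε̃(h) = ε(h)·1_H. Then (M, ε̃, E_M) is a right Rota-Baxter paired H-module of weight −1: E_M(m)·ε̃(h) = E_M(E_M(m)·h) + E_M(m·ε̃(h)) − E_M(m·h) for all h ∈ H, m ∈ M. -/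
/-!
Write `m · h` for the action and `P(m) = m₍₀₎ · S(m₍₁₎)`. The Hopf-module compatibility together
with `S(ab) = S(b) S(a)` gives `P(m · h) = m₍₀₎ · h₁ S(h₂) S(m₍₁₎) = ε(h) P(m)`, and then the
counit axiom gives `P(P(m)) = ε(m₍₁₎) P(m₍₀₎) = P(m)`. Since `m · ε̃(h) = ε(h) m`, both sides of
the Rota-Baxter identity reduce to `ε(h) P(m)`.
-/

open Coalgebra (counit comul)
open scoped Coalgebra
open HopfAlgebra TensorProduct

namespace HopfModule

variable {R H M : Type*} [CommSemiring R] [Semiring H] [HopfAlgebra R H]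
  [AddCommMonoid M] [Module R M] (mu : M ⊗[R] H →ₗ[R] M) (rho : M →ₗ[R] M ⊗[R] H)

noncomputable def coinvariantProj : M →ₗ[R] M :=
  mu ∘ₗ map LinearMap.id (antipode R) ∘ₗ rho

variable {mu rho}

theorem sum_act_mul_antipode
    (hmu_assoc : ∀ (m : M) (g h : H), mu (mu (m ⊗ₜ g) ⊗ₜ h) = mu (m ⊗ₜ (g * h)))
    (m : M) (a g : H) :
    ∑ j ∈ (ℛ R g).index, mu (mu (m ⊗ₜ (ℛ R g).left j) ⊗ₜ antipode R (a * (ℛ R g).right j))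
      = counit (R := R) g • mu (m ⊗ₜ antipode R a) := by
  simp_rw [antipode_mul_antidistrib, hmu_assoc, ← mul_assoc]
  rw [← map_sum, ← tmul_sum, ← Finset.sum_mul, sum_mul_antipode_eq_smul, smul_mul_assoc,
    one_mul, tmul_smul, map_smul]

theorem coinvariantProj_act
    (hmu_assoc : ∀ (m : M) (g h : H), mu (mu (m ⊗ₜ g) ⊗ₜ h) = mu (m ⊗ₜ (g * h)))
    (hHopf : rho ∘ₗ mu = map mu (LinearMap.mul' R H) ∘ₗ
      (tensorTensorTensorComm R M H H H).toLinearMap ∘ₗ map rho (comul (R := R) (A := H)))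
    (x : M) (g : H) :
    coinvariantProj mu rho (mu (x ⊗ₜ g)) = counit (R := R) g • coinvariantProj mu rho x := by
  have hrho : rho (mu (x ⊗ₜ g)) =
      map mu (LinearMap.mul' R H) (tensorTensorTensorComm R M H H H (rho x ⊗ₜ comul g)) :=
    LinearMap.congr_fun hHopf (x ⊗ₜ g)
  simp only [coinvariantProj, LinearMap.comp_apply, hrho]
  induction rho x using TensorProduct.induction_on with
  | zero => simp
  | add u v hu hv => simp only [add_tmul, map_add, hu, hv, smul_add]
  | tmul m a =>
    rw [← (ℛ R g).eq, tmul_sum]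
    simpa only [map_sum, tensorTensorTensorComm_tmul, map_tmul, LinearMap.mul'_apply,
      LinearMap.id_coe, id_eq] using sum_act_mul_antipode hmu_assoc m a g

theorem coinvariantProj_idem
    (hmu_assoc : ∀ (m : M) (g h : H), mu (mu (m ⊗ₜ g) ⊗ₜ h) = mu (m ⊗ₜ (g * h)))
    (hcounit : (TensorProduct.rid R M).toLinearMap ∘ₗ map LinearMap.id (counit (R := R))
      ∘ₗ rho = LinearMap.id)
    (hHopf : rho ∘ₗ mu = map mu (LinearMap.mul' R H) ∘ₗ
      (tensorTensorTensorComm R M H H H).toLinearMap ∘ₗ map rho (comul (R := R) (A := H)))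
    (x : M) :
    coinvariantProj mu rho (coinvariantProj mu rho x) = coinvariantProj mu rho x := by
  have hx : x = TensorProduct.rid R M (map LinearMap.id (counit (R := R)) (rho x)) :=
    (LinearMap.congr_fun hcounit x).symm
  conv_rhs => rw [hx]
  simp only [coinvariantProj, LinearMap.comp_apply]
  induction rho x using TensorProduct.induction_on with
  | zero => simp
  | add u v hu hv => simp only [map_add, hu, hv]
  | tmul m a =>
    simp only [map_tmul, LinearMap.id_coe, id_eq, rid_tmul, map_smul]
    simpa only [coinvariantProj, LinearMap.comp_apply, counit_antipode] using
      coinvariantProj_act hmu_assoc hHopf m (antipode R a)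

end HopfModule

open HopfModule

theorem stmt14_general {k H M : Type*} [Field k] [Ring H] [HopfAlgebra k H]
    [AddCommGroup M] [Module k M]
    (mu : M ⊗[k] H →ₗ[k] M)
    (hmu_one : ∀ m : M, mu (m ⊗ₜ[k] (1 : H)) = m)
    (hmu_assoc : ∀ (m : M) (g h : H),
      mu (mu (m ⊗ₜ[k] g) ⊗ₜ[k] h) = mu (m ⊗ₜ[k] (g * h)))
    (rho : M →ₗ[k] M ⊗[k] H)
    (hcounit :
      (TensorProduct.rid k M).toLinearMap
          ∘ₗ TensorProduct.map (LinearMap.id : M →ₗ[k] M)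
              (Coalgebra.counit (R := k) (A := H)) ∘ₗ rho
        = LinearMap.id)
    (hHopf : rho ∘ₗ mu
      = (TensorProduct.map mu (LinearMap.mul' k H))
          ∘ₗ (TensorProduct.tensorTensorTensorComm k M H H H).toLinearMap
          ∘ₗ TensorProduct.map rho (Coalgebra.comul (R := k) (A := H))) :
    ∀ (h : H) (m : M),
      let E : M → M := fun x =>
        mu (TensorProduct.map (LinearMap.id : M →ₗ[k] M)
          (HopfAlgebra.antipode (R := k) (A := H)) (rho x))
      mu (E m ⊗ₜ[k] (Coalgebra.counit (R := k) h • (1 : H)))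
        = E (mu (E m ⊗ₜ[k] h))
          + E (mu (m ⊗ₜ[k] (Coalgebra.counit (R := k) h • (1 : H))))
          - E (mu (m ⊗ₜ[k] h)) := by
  intro h m E
  have hE : E = coinvariantProj mu rho := rfl
  have act_counit_one (x : M) :
      mu (x ⊗ₜ (counit (R := k) h • (1 : H))) = counit (R := k) h • x := by
    rw [tmul_smul, map_smul, hmu_one]
  rw [hE, act_counit_one, act_counit_one, coinvariantProj_act hmu_assoc hHopf,
    coinvariantProj_act hmu_assoc hHopf, coinvariantProj_idem hmu_assoc hcounit hHopf,
    map_smul, add_sub_cancel_right]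

/-- let `H` be a Hopf algebra over a field `k` with antipode `S`
and counit `ε`, and let `M` be a right `H`-Hopf module with right action
`mu : M ⊗ H → M` and coaction `rho : M → M ⊗ H` satisfying the Hopf-module
compatibility `ρ(m·h) = (m₍₀₎·h₁) ⊗ (m₍₁₎h₂)`. With `E_M(m) = m₍₀₎·S(m₍₁₎)` and
`ε̃(h) = ε(h)·1_H`, the triple `(M, ε̃, E_M)` is a right Rota-Baxter paired
`H`-module of weight `-1`:
`E_M(m)·ε̃(h) = E_M(E_M(m)·h) + E_M(m·ε̃(h)) - E_M(m·h)`. -/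
theorem stmt14 {k H M : Type*} [Field k] [Ring H] [HopfAlgebra k H]
    [AddCommGroup M] [Module k M]
    (mu : M ⊗[k] H →ₗ[k] M)
    (hmu_one : ∀ m : M, mu (m ⊗ₜ[k] (1 : H)) = m)
    (hmu_assoc : ∀ (m : M) (g h : H),
      mu (mu (m ⊗ₜ[k] g) ⊗ₜ[k] h) = mu (m ⊗ₜ[k] (g * h)))
    (rho : M →ₗ[k] M ⊗[k] H)
    (hcoassoc :
      (TensorProduct.assoc k M H H).toLinearMap
          ∘ₗ TensorProduct.map rho (LinearMap.id : H →ₗ[k] H) ∘ₗ rho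
        = TensorProduct.map (LinearMap.id : M →ₗ[k] M)
            (Coalgebra.comul (R := k) (A := H)) ∘ₗ rho)
    (hcounit :
      (TensorProduct.rid k M).toLinearMap
          ∘ₗ TensorProduct.map (LinearMap.id : M →ₗ[k] M)
              (Coalgebra.counit (R := k) (A := H)) ∘ₗ rho
        = LinearMap.id)
    (hHopf : rho ∘ₗ mu
      = (TensorProduct.map mu (LinearMap.mul' k H))
          ∘ₗ (TensorProduct.tensorTensorTensorComm k M H H H).toLinearMap
          ∘ₗ TensorProduct.map rho (Coalgebra.comul (R := k) (A := H))) :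
    ∀ (h : H) (m : M),
      let E : M → M := fun x =>
        mu (TensorProduct.map (LinearMap.id : M →ₗ[k] M)
          (HopfAlgebra.antipode (R := k) (A := H)) (rho x))
      mu (E m ⊗ₜ[k] (Coalgebra.counit (R := k) h • (1 : H)))
        = E (mu (E m ⊗ₜ[k] h))
          + E (mu (m ⊗ₜ[k] (Coalgebra.counit (R := k) h • (1 : H))))
          - E (mu (m ⊗ₜ[k] h)) :=
  stmt14_general mu hmu_one hmu_assoc rho hcounit hHopf
end

section
/- Let k be a field and H a bialgebra over k. Suppose χ ∈ H* is a left cointegral, i.e. f∗χ = f(1_H)·χ for all f ∈ H*, with χ(1_H) = 1 (such χ exists when H is cosemisimple). Let M be a left, right H-dimodule: M is a left H-module and a right H-comodule with coaction ρ(m) = m₍₀₎ ⊗ m₍₁₎ satisfying ρ(h·m) = (h·m₍₀₎) ⊗ m₍₁₎ for all h ∈ H, m ∈ M. Define T : M → M by T(m) = m₍₀₎·χ(m₍₁₎). Then (M, T) is a generic Rota-Baxter paired H-module of weight −1: for every k-linear map P : H → H and all h ∈ H, m ∈ M, P(h)·T(m) = T(P(h)·m) + T(h·T(m)) − T(h·m).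 -/
open scoped TensorProduct

/-- let `H` be a bialgebra over a field `k` and `χ ∈ H*` a left
cointegral (`f ∗ χ = f(1)·χ` for all `f ∈ H*`) with `χ(1) = 1`. For a left,
right `H`-dimodule `M` (coaction `rho` with `ρ(h·m) = (h·m₍₀₎) ⊗ m₍₁₎`), the
map `T(m) = m₍₀₎·χ(m₍₁₎)` makes `(M, T)` a generic Rota-Baxter paired
`H`-module of weight `-1`. -/
theorem stmt17 {k H M : Type*} [Field k] [Ring H] [Bialgebra k H]
    [AddCommGroup M] [Module k M] [Module H M] [IsScalarTower k H M]
    [SMulCommClass k H M]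
    (χ : H →ₗ[k] k)
    (hχ : ∀ (f : H →ₗ[k] k) (h : H),
      (TensorProduct.lid k k) (TensorProduct.map f χ (Coalgebra.comul h))
        = f 1 * χ h)
    (hχ1 : χ 1 = 1)
    (rho : M →ₗ[k] M ⊗[k] H)
    (hcoassoc :
      (TensorProduct.assoc k M H H).toLinearMap
          ∘ₗ TensorProduct.map rho (LinearMap.id : H →ₗ[k] H) ∘ₗ rho
        = TensorProduct.map (LinearMap.id : M →ₗ[k] M)
            (Coalgebra.comul (R := k) (A := H)) ∘ₗ rho)
    (hcounit :
      (TensorProduct.rid k M).toLinearMap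
          ∘ₗ TensorProduct.map (LinearMap.id : M →ₗ[k] M)
              (Coalgebra.counit (R := k) (A := H)) ∘ₗ rho
        = LinearMap.id)
    (hdimod : ∀ (h : H) (m : M), rho (h • m) = h • rho m) :
    let T : M → M := fun m =>
      (TensorProduct.rid k M)
        (TensorProduct.map (LinearMap.id : M →ₗ[k] M) χ (rho m))
    ∀ (P : H →ₗ[k] H) (h : H) (m : M),
      P h • T m = T (P h • m) + T (h • T m) - T (h • m) := by
  intro T P h m
  -- T as a linear map
  set Tl : M →ₗ[k] M :=
    (TensorProduct.rid k M).toLinearMap ∘ₗ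
      TensorProduct.map LinearMap.id χ ∘ₗ rho with hTldef
  have hT : ∀ x : M, T x = Tl x := fun x => rfl
  -- H-equivariance of T
  have hsmul : ∀ (g : H) (x : M), Tl (g • x) = g • Tl x := by
    intro g x
    simp only [hTldef, LinearMap.comp_apply, LinearEquiv.coe_coe]
    rw [hdimod]
    induction rho x using TensorProduct.induction_on with
    | zero => simp
    | tmul u v =>
        rw [TensorProduct.smul_tmul']
        simp only [TensorProduct.map_tmul, LinearMap.id_coe, id_eq,
          TensorProduct.rid_tmul]
        exact smul_comm (χ v) g u
    | add a b ha hb =>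
        rw [smul_add, map_add, map_add, ha, hb, map_add, map_add, smul_add]
  -- a sub-claim for the associator computation
  have sub : ∀ (y : M ⊗[k] H) (v : H),
      (TensorProduct.rid k M)
        (TensorProduct.map LinearMap.id
          ((TensorProduct.lid k k).toLinearMap ∘ₗ TensorProduct.map χ χ)
          ((TensorProduct.assoc k M H H) (y ⊗ₜ[k] v)))
        = χ v • (TensorProduct.rid k M)
            (TensorProduct.map LinearMap.id χ y) := by
    intro y v
    induction y using TensorProduct.induction_on with
    | zero => simp
    | tmul a b =>
        simp [TensorProduct.assoc_tmul, TensorProduct.map_tmul,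
          TensorProduct.lid_tmul, TensorProduct.rid_tmul, smul_smul,
          mul_comm]
    | add a b ha hb =>
        rw [TensorProduct.add_tmul, map_add, map_add, map_add, ha, hb,
          map_add, map_add, smul_add]
  -- key: Tl ∘ (rid ∘ map id χ) agrees with Φ ∘ assoc ∘ (rho ⊗ id)
  have key : ∀ x : M ⊗[k] H,
      Tl ((TensorProduct.rid k M) (TensorProduct.map LinearMap.id χ x))
        = (TensorProduct.rid k M)
            (TensorProduct.map LinearMap.id
              ((TensorProduct.lid k k).toLinearMap ∘ₗ TensorProduct.map χ χ)
              ((TensorProduct.assoc k M H H)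
                (TensorProduct.map rho LinearMap.id x))) := by
    intro x
    induction x using TensorProduct.induction_on with
    | zero => simp
    | tmul u v =>
        simp only [TensorProduct.map_tmul, LinearMap.id_coe, id_eq,
          TensorProduct.rid_tmul, map_smul, sub]
        simp [hTldef]
    | add a b ha hb => simp only [map_add, ha, hb]
  -- the cointegral collapses χ⊗χ∘comul to χ
  have eq2 : ∀ x : M ⊗[k] H,
      (TensorProduct.rid k M)
        (TensorProduct.map LinearMap.id
          ((TensorProduct.lid k k).toLinearMap ∘ₗ TensorProduct.map χ χ)
          (TensorProduct.map LinearMap.id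
            (Coalgebra.comul (R := k) (A := H)) x))
        = (TensorProduct.rid k M)
            (TensorProduct.map LinearMap.id χ x) := by
    intro x
    induction x using TensorProduct.induction_on with
    | zero => simp
    | tmul u v =>
        simp only [TensorProduct.map_tmul, LinearMap.id_coe, id_eq,
          LinearMap.comp_apply, LinearEquiv.coe_coe, TensorProduct.rid_tmul]
        rw [hχ χ v, hχ1, one_mul]
    | add a b ha hb => simp only [map_add, ha, hb]
  -- idempotency of T
  have hidem : ∀ x : M, Tl (Tl x) = Tl x := by
    intro x
    have h2 := LinearMap.congr_fun hcoassoc x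
    simp only [LinearMap.comp_apply, LinearEquiv.coe_coe] at h2
    have h3 : Tl x
        = (TensorProduct.rid k M) (TensorProduct.map LinearMap.id χ (rho x)) := rfl
    rw [h3, key (rho x), h2, eq2, ← h3]
  -- finish
  rw [hT, hT, hT, hT, hsmul (P h) m, hsmul h (Tl m), hidem, hsmul h m]
  abel
end
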